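/- arXiv:2410.22933 — 8 statements merged into one kernel-verified Lean document; each statement's English description precedes it below -/
import Mathlib

section
/- The two-element family {ω, ω*} is Ex-learnable: there exists a learner M such that for every structure S that is a copy of ω, M S s is eventually constantly the conjecture for ω, and for every structure S that is a copy of ω*, M S s is eventually constantly the conjecture for ω*. -/
/-- A structure on domain ℕ: a binary relation given as a map to `Bool`. -/
abbrev Struc := ℕ → ℕ → Bool

/-- The restrictions of `R` and `R'` to `{0,…,s} × {0,…,s}` agree. -/
def restrEq (R R' : Struc) (s : ℕ) : Prop :=
  ∀ x ≤ s, ∀ y ≤ s, R x y = R' x y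

/-- `R` and `R'` are isomorphic structures. -/
def Isom (R R' : Struc) : Prop :=
  ∃ e : ℕ ≃ ℕ, ∀ x y, R' (e x) (e y) = R x y

/-- `R↾s` embeds into `R'`: there is a map injective on `{0,…,s}` preserving the relation. -/
def EmbedsRestr (R : Struc) (s : ℕ) (R' : Struc) : Prop :=
  ∃ h : ℕ → ℕ, (∀ x ≤ s, ∀ y ≤ s, h x = h y → x = y) ∧
    (∀ x ≤ s, ∀ y ≤ s, R' (h x) (h y) = R x y)

/-- The learning domain of a family: all isomorphic copies of members of the family. -/
def LD {I : Type} (A : I → Struc) : Set Struc := {R | ∃ i, Isom R (A i)}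

/-- A learner: its conjecture at stage `s` depends only on `R↾s`. -/
def IsLearner {I : Type} (M : Struc → ℕ → Option I) : Prop :=
  ∀ R R' s, restrEq R R' s → M R s = M R' s

/-- `M` Ex-learns the family `A`. -/
def ExLearns {I : Type} (A : I → Struc) (M : Struc → ℕ → Option I) : Prop :=
  ∀ R i, Isom R (A i) → ∃ s₀, ∀ s ≥ s₀, M R s = some i

/-- `M` Fin-learns the family `A`. -/
def FinLearns {I : Type} (A : I → Struc) (M : Struc → ℕ → Option I) : Prop :=
  ∀ R i, Isom R (A i) →
    ∃ s₀, (∀ s < s₀, M R s = none) ∧ (∀ s ≥ s₀, M R s = some i)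

/-- `M` co-learns the family `A`. -/
def CoLearns {I : Type} (A : I → Struc) (M : Struc → ℕ → Option I) : Prop :=
  ∀ R i, Isom R (A i) → ∀ j, (∃ s, M R s = some j) ↔ j ≠ i

/-- `M` nUs-learns the family `A`: it Ex-learns it and never abandons the correct conjecture. -/
def NUsLearns {I : Type} (A : I → Struc) (M : Struc → ℕ → Option I) : Prop :=
  ExLearns A M ∧
    ∀ R i, Isom R (A i) → ∀ s, M R s = some i → ∀ t ≥ s, M R t = some i

/-- `M` Dec-learns the family `A`: it Ex-learns it and never repeats an abandoned conjecture. -/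
def DecLearns {I : Type} (A : I → Struc) (M : Struc → ℕ → Option I) : Prop :=
  ExLearns A M ∧
    ∀ R ∈ LD A, ∀ (j : I) (s : ℕ), M R s = some j → M R (s + 1) ≠ some j →
      ∀ t > s, M R t ≠ some j

/-- `M` PL-learns the family `A`: the unique conjecture output infinitely often is correct. -/
def PLLearns {I : Type} (A : I → Struc) (M : Struc → ℕ → Option I) : Prop :=
  ∀ R ∈ LD A, ∀ i, {s | M R s = some i}.Infinite ↔ Isom R (A i)

/-- The relation `E₀` on Baire space: eventual agreement. -/
def E0 (p q : ℕ → ℕ) : Prop := ∃ m, ∀ n ≥ m, p n = q n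

/-- The relation `E₃` on `ℕ → (ℕ → ℕ)`: columnwise `E₀`. -/
def E3 (p q : ℕ → ℕ → ℕ) : Prop := ∀ m, E0 (p m) (q m)

/-- The relation `E_range` on Baire space: equality of ranges. -/
def Erange (p q : ℕ → ℕ) : Prop := Set.range p = Set.range q

/-- `R` is a copy of ω: its relation is a linear order isomorphic to `(ℕ, ≤)`. -/
def IsCopyOfOmega (R : Struc) : Prop :=
  ∃ e : ℕ ≃ ℕ, ∀ x y, R (e x) (e y) = decide (x ≤ y)

/-- `R` is a copy of ω*: its relation is a linear order isomorphic to the dual of `(ℕ, ≤)`. -/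
def IsCopyOfOmegaStar (R : Struc) : Prop :=
  ∃ e : ℕ ≃ ℕ, ∀ x y, R (e x) (e y) = decide (y ≤ x)

/-!
Look at the element `0`. In a copy of ω it has finitely many predecessors and infinitely many
successors; in a copy of ω* it is the other way round. So the learner that, at stage `s`,
compares the numbers of predecessors and of successors of `0` among `0, …, s - 1` converges
to the right answer on both kinds of copies.
-/

open Filter Nat

theorem Nat.count_congr_of_forall_lt {p q : ℕ → Prop} [DecidablePred p] [DecidablePred q]
    {n : ℕ} (h : ∀ k < n, (p k ↔ q k)) : count p n = count q n :=
  le_antisymm (count_mono_left fun k hk => (h k hk).1) (count_mono_left fun k hk => (h k hk).2)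

theorem Nat.eventually_count_lt_count {p q : ℕ → Prop} [DecidablePred p] [DecidablePred q]
    (hp : {n | p n}.Finite) (hq : {n | q n}.Infinite) : ∀ᶠ n in atTop, count p n < count q n := by
  obtain ⟨m, hm⟩ := surjective_count_of_infinite_setOfPred hq (hp.toFinset.card + 1)
  filter_upwards [eventually_ge_atTop m] with n hn
  calc count p n ≤ hp.toFinset.card := count_le_card hp n
    _ < count q m := by omega
    _ ≤ count q n := count_monotone q hn

namespace IsCopyOfOmega

variable {R : Struc}

theorem finite_setOf_rel_left (h : IsCopyOfOmega R) (a : ℕ) : {x | R x a}.Finite := by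
  obtain ⟨e, he⟩ := h
  have : {x | R x a} = e '' Set.Iic (e.symm a) := by
    ext x
    have hx := he (e.symm x) (e.symm a)
    simp only [Equiv.apply_symm_apply] at hx
    simp [e.image_eq_preimage_symm, hx]
  exact this ▸ (Set.finite_Iic _).image e

theorem infinite_setOf_rel_right (h : IsCopyOfOmega R) (a : ℕ) : {x | R a x}.Infinite := by
  obtain ⟨e, he⟩ := h
  have : {x | R a x} = e '' Set.Ici (e.symm a) := by
    ext x
    have hx := he (e.symm a) (e.symm x)
    simp only [Equiv.apply_symm_apply] at hx
    simp [e.image_eq_preimage_symm, hx]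
  exact this ▸ (Set.Ici_infinite _).image e.injective.injOn

end IsCopyOfOmega

theorem IsCopyOfOmegaStar.isCopyOfOmega_flip {R : Struc} (h : IsCopyOfOmegaStar R) :
    IsCopyOfOmega (flip R) :=
  let ⟨e, he⟩ := h
  ⟨e, fun x y => he y x⟩

def omegaLearner (R : Struc) (s : ℕ) : Option (Fin 2) :=
  if count (fun x => R x 0) s < count (fun x => R 0 x) s then some 0 else some 1

theorem isLearner_omegaLearner : IsLearner omegaLearner := by
  intro R R' s hRR'
  have hpred : count (fun x => R x 0) s = count (fun x => R' x 0) s :=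
    count_congr_of_forall_lt fun k hk => by rw [hRR' k hk.le 0 (zero_le s)]
  have hsucc : count (fun x => R 0 x) s = count (fun x => R' 0 x) s :=
    count_congr_of_forall_lt fun k hk => by rw [hRR' 0 (zero_le s) k hk.le]
  simp only [omegaLearner, hpred, hsucc]

theorem IsCopyOfOmega.eventually_omegaLearner_eq {R : Struc} (h : IsCopyOfOmega R) :
    ∀ᶠ s in atTop, omegaLearner R s = some 0 := by
  filter_upwards [eventually_count_lt_count (h.finite_setOf_rel_left 0)
    (h.infinite_setOf_rel_right 0)] with s hs
  simp [omegaLearner, hs]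

theorem IsCopyOfOmegaStar.eventually_omegaLearner_eq {R : Struc} (h : IsCopyOfOmegaStar R) :
    ∀ᶠ s in atTop, omegaLearner R s = some 1 := by
  have h' := h.isCopyOfOmega_flip
  filter_upwards [eventually_count_lt_count (h'.finite_setOf_rel_left 0)
    (h'.infinite_setOf_rel_right 0)] with s hs
  exact if_neg (lt_asymm hs)

/-- The family `{ω, ω*}` is Ex-learnable. -/
theorem omega_omegaStar_ExLearnable :
    ∃ M : Struc → ℕ → Option (Fin 2), IsLearner M ∧
      (∀ R, IsCopyOfOmega R → ∃ s₀, ∀ s ≥ s₀, M R s = some 0) ∧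
      (∀ R, IsCopyOfOmegaStar R → ∃ s₀, ∀ s ≥ s₀, M R s = some 1) :=
  ⟨omegaLearner, isLearner_omegaLearner,
    fun _ h => eventually_atTop.mp h.eventually_omegaLearner_eq,
    fun _ h => eventually_atTop.mp h.eventually_omegaLearner_eq⟩
end

section
/- A countable family K = (A_i)_{i∈I} of pairwise nonisomorphic structures is Fin-learnable if and only if for every i ∈ I there exists s ∈ ℕ such that for every j ∈ I with j ≠ i, the finite restriction A_i↾s does not embed into A_j. (This is the paper's characterization of Fin-learnability by Σ^inf_1-strong antichains, stated in its equivalent combinatorial form for relational structures, where a Σ^inf_1 sentence separating structures can be taken to assert the existence of an embedded copy of a finite restriction.) -/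
/-!
If a learner first conjectures `i` on `A i` at stage `s`, then `A i↾s` embeds into no other `A j`:
extending such an embedding to a permutation of ℕ yields a copy of `A j` that agrees with `A i`
up to `s`, on which the learner would conjecture the wrong index `i` at stage `s`.
Conversely, given such bounds `σ i`, the learner waits until some `A i↾(σ i)` embeds into the part
of the data seen so far and then conjectures `i`; on a copy of `A j` only `i = j` can ever
qualify, and it eventually does.
-/

lemma exists_equiv_eqOn_Iic (s : ℕ) (h : ℕ → ℕ)
    (hinj : ∀ x ≤ s, ∀ y ≤ s, h x = h y → x = y) :
    ∃ e : ℕ ≃ ℕ, ∀ x ≤ s, e x = h x := by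
  let f : Set.Iic s ↪ ℕ := ⟨fun x => h x, fun x y hxy => Subtype.ext (hinj x x.2 y y.2 hxy)⟩
  have hcard : Cardinal.mk (Set.Iic s) < Cardinal.mk ℕ := by
    rw [Cardinal.mk_nat]; exact (Set.finite_Iic s).lt_aleph0
  obtain ⟨e, he⟩ := Cardinal.extend_function_of_lt f hcard ⟨Equiv.refl ℕ⟩
  exact ⟨e, fun x hx => he ⟨x, hx⟩⟩

lemma Isom.refl (R : Struc) : Isom R R := ⟨Equiv.refl ℕ, fun _ _ => rfl⟩

lemma Isom.symm {R R' : Struc} (h : Isom R R') : Isom R' R := by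
  obtain ⟨e, he⟩ := h
  exact ⟨e.symm, fun x y => by rw [← he, e.apply_symm_apply, e.apply_symm_apply]⟩

lemma Isom.embedsRestr {R R' : Struc} (h : Isom R R') (s : ℕ) : EmbedsRestr R s R' := by
  obtain ⟨e, he⟩ := h
  exact ⟨e, fun x _ y _ hxy => e.injective hxy, fun x _ y _ => he x y⟩

lemma EmbedsRestr.trans_isom {B R R' : Struc} {s : ℕ} (hB : EmbedsRestr B s R)
    (hR : Isom R R') : EmbedsRestr B s R' := by
  obtain ⟨h, hinj, hpres⟩ := hB
  obtain ⟨e, he⟩ := hR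
  exact ⟨e ∘ h, fun x hx y hy hxy => hinj x hx y hy (e.injective hxy),
    fun x hx y hy => (he _ _).trans (hpres x hx y hy)⟩

lemma EmbedsRestr.exists_isom_restrEq {B R : Struc} {s : ℕ} (hB : EmbedsRestr B s R) :
    ∃ R', Isom R' R ∧ restrEq B R' s := by
  obtain ⟨h, hinj, hpres⟩ := hB
  obtain ⟨e, he⟩ := exists_equiv_eqOn_Iic s h hinj
  refine ⟨fun x y => R (e x) (e y), ⟨e, fun _ _ => rfl⟩, fun x hx y hy => ?_⟩
  simp only [he x hx, he y hy, hpres x hx y hy]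

/-- `B↾s` embeds into `R↾t`. -/
def EmbedsRestrWithin (B : Struc) (s : ℕ) (R : Struc) (t : ℕ) : Prop :=
  ∃ h : ℕ → ℕ, (∀ x ≤ s, h x ≤ t) ∧ (∀ x ≤ s, ∀ y ≤ s, h x = h y → x = y) ∧
    (∀ x ≤ s, ∀ y ≤ s, R (h x) (h y) = B x y)

section EmbedsRestrWithin

variable {B R R' : Struc} {s t t' : ℕ}

lemma EmbedsRestrWithin.mono (hB : EmbedsRestrWithin B s R t) (htt' : t ≤ t') :
    EmbedsRestrWithin B s R t' := by
  obtain ⟨h, hle, hinj, hpres⟩ := hB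
  exact ⟨h, fun x hx => (hle x hx).trans htt', hinj, hpres⟩

lemma EmbedsRestrWithin.of_restrEq (hB : EmbedsRestrWithin B s R t) (hRR' : restrEq R R' t) :
    EmbedsRestrWithin B s R' t := by
  obtain ⟨h, hle, hinj, hpres⟩ := hB
  exact ⟨h, hle, hinj, fun x hx y hy =>
    (hRR' _ (hle x hx) _ (hle y hy)).symm.trans (hpres x hx y hy)⟩

lemma embedsRestrWithin_congr (hRR' : restrEq R R' t) :
    EmbedsRestrWithin B s R t ↔ EmbedsRestrWithin B s R' t :=
  ⟨fun hB => hB.of_restrEq hRR', fun hB => hB.of_restrEq fun x hx y hy => (hRR' x hx y hy).symm⟩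

lemma embedsRestr_iff_exists_embedsRestrWithin :
    EmbedsRestr B s R ↔ ∃ t, EmbedsRestrWithin B s R t := by
  constructor
  · rintro ⟨h, hinj, hpres⟩
    refine ⟨(Finset.range (s + 1)).sup h, h, fun x hx => ?_, hinj, hpres⟩
    exact Finset.le_sup (Finset.mem_range.2 (Nat.lt_succ_of_le hx))
  · rintro ⟨t, h, -, hinj, hpres⟩
    exact ⟨h, hinj, hpres⟩

end EmbedsRestrWithin

section Learner

variable {I : Type} {A : I → Struc}

lemma FinLearns.eq_of_apply_eq_some {M : Struc → ℕ → Option I} (hM : FinLearns A M)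
    {R : Struc} {i j : I} {s : ℕ} (hR : Isom R (A j)) (hs : M R s = some i) : i = j := by
  obtain ⟨s₀, hnone, hsome⟩ := hM R j hR
  rcases lt_or_ge s s₀ with hlt | hge
  · simp [hnone s hlt] at hs
  · simpa [hsome s hge] using hs.symm

lemma FinLearns.exists_not_embedsRestr {M : Struc → ℕ → Option I} (hL : IsLearner M)
    (hM : FinLearns A M) (i : I) : ∃ s, ∀ j, j ≠ i → ¬ EmbedsRestr (A i) s (A j) := by
  obtain ⟨s, -, hsome⟩ := hM (A i) i (Isom.refl _)
  refine ⟨s, fun j hji hemb => hji ?_⟩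
  obtain ⟨R, hR, hrestr⟩ := hemb.exists_isom_restrEq
  have hRs : M R s = some i := (hL _ _ s hrestr).symm.trans (hsome s le_rfl)
  exact (hM.eq_of_apply_eq_some hR hRs).symm

open Classical in
/-- On a structure of the learning domain at most one `i` ever qualifies when `σ` witnesses the
antichain property, so the choice is immaterial there. -/
noncomputable def antichainLearner (A : I → Struc) (σ : I → ℕ) : Struc → ℕ → Option I :=
  fun R t => if h : ∃ i, EmbedsRestrWithin (A i) (σ i) R t then some h.choose else none

variable (σ : I → ℕ)

lemma antichainLearner_isLearner : IsLearner (antichainLearner A σ) := by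
  intro R R' t hRR'
  have hP : (fun i => EmbedsRestrWithin (A i) (σ i) R t) =
      fun i => EmbedsRestrWithin (A i) (σ i) R' t :=
    funext fun _ => propext (embedsRestrWithin_congr hRR')
  unfold antichainLearner
  rw [hP]

lemma antichainLearner_eq_none {R : Struc} {t : ℕ}
    (hR : ∀ j, ¬ EmbedsRestrWithin (A j) (σ j) R t) : antichainLearner A σ R t = none :=
  dif_neg fun ⟨j, hj⟩ => hR j hj

lemma antichainLearner_eq_some {R : Struc} {i : I} {t : ℕ}
    (hi : EmbedsRestrWithin (A i) (σ i) R t)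
    (huniq : ∀ j, EmbedsRestrWithin (A j) (σ j) R t → j = i) :
    antichainLearner A σ R t = some i := by
  have hex : ∃ j, EmbedsRestrWithin (A j) (σ j) R t := ⟨i, hi⟩
  rw [antichainLearner, dif_pos hex, huniq _ hex.choose_spec]

lemma antichainLearner_finLearns (hσ : ∀ i j, j ≠ i → ¬ EmbedsRestr (A i) (σ i) (A j)) :
    FinLearns A (antichainLearner A σ) := by
  classical
  intro R i hR
  have huniq : ∀ t j, EmbedsRestrWithin (A j) (σ j) R t → j = i := fun t j hj => by
    by_contra hji
    have hemb : EmbedsRestr (A j) (σ j) R := embedsRestr_iff_exists_embedsRestrWithin.2 ⟨t, hj⟩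
    exact hσ j i (Ne.symm hji) (hemb.trans_isom hR)
  have hex : ∃ t, EmbedsRestrWithin (A i) (σ i) R t :=
    embedsRestr_iff_exists_embedsRestrWithin.1 (hR.symm.embedsRestr _)
  refine ⟨Nat.find hex, fun t ht => ?_, fun t ht => ?_⟩
  · exact antichainLearner_eq_none σ fun j hj => Nat.find_min hex ht (huniq t j hj ▸ hj)
  · exact antichainLearner_eq_some σ ((Nat.find_spec hex).mono ht) (huniq t)

end Learner

theorem finLearnable_iff_strong_antichain_general {I : Type} (A : I → Struc) :
    (∃ M : Struc → ℕ → Option I, IsLearner M ∧ FinLearns A M) ↔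
      ∀ i, ∃ s, ∀ j, j ≠ i → ¬ EmbedsRestr (A i) s (A j) := by
  constructor
  · rintro ⟨M, hL, hM⟩
    exact hM.exists_not_embedsRestr hL
  · intro hs
    choose σ hσ using hs
    exact ⟨antichainLearner A σ, antichainLearner_isLearner σ, antichainLearner_finLearns σ hσ⟩

/-- A countable family of pairwise nonisomorphic structures is Fin-learnable iff for every
`i` there is an `s` such that `(A i)↾s` embeds into no other member of the family. -/
theorem finLearnable_iff_strong_antichain {I : Type} [Countable I] (A : I → Struc)
    (hA : ∀ i j, i ≠ j → ¬ Isom (A i) (A j)) :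
    (∃ M : Struc → ℕ → Option I, IsLearner M ∧ FinLearns A M) ↔
      ∀ i, ∃ s, ∀ j, j ≠ i → ¬ EmbedsRestr (A i) s (A j) :=
  finLearnable_iff_strong_antichain_general A
end

section
/- A countable family K = (A_i)_{i∈I} of pairwise nonisomorphic structures is co-learnable if and only if for all i ≠ j in I there exists s ∈ ℕ such that A_i↾s does not embed into A_j and A_j↾s does not embed into A_i. (This is the paper's characterization of co-learnability by Σ^inf_1-antichains, stated in its equivalent combinatorial form for relational structures.) -/
open Classical in
/-- Truncation of a structure to `{0,…,s}`. -/
noncomputable def truncS (R : Struc) (s : ℕ) : Struc :=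
  fun x y => if x ≤ s ∧ y ≤ s then R x y else false

theorem truncS_eq {R R' : Struc} {s : ℕ} (h : restrEq R R' s) :
    truncS R s = truncS R' s := by
  funext x y
  unfold truncS
  split_ifs with hx
  · exact h x hx.1 y hx.2
  · rfl

theorem embedsRestr_truncS {R Q : Struc} {s t : ℕ} (ht : t ≤ s) :
    EmbedsRestr (truncS R s) t Q ↔ EmbedsRestr R t Q := by
  have key : ∀ x ≤ t, ∀ y ≤ t, truncS R s x y = R x y := by
    intro x hx y hy
    unfold truncS
    rw [if_pos ⟨hx.trans ht, hy.trans ht⟩]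
  constructor <;> rintro ⟨h, hinj, hrel⟩ <;>
    refine ⟨h, hinj, fun x hx y hy => ?_⟩
  · rw [← key x hx y hy]; exact hrel x hx y hy
  · rw [key x hx y hy]; exact hrel x hx y hy

theorem embedsRestr_mono {P Q : Struc} {s t : ℕ} (h : EmbedsRestr P s Q) (ht : t ≤ s) :
    EmbedsRestr P t Q := by
  obtain ⟨f, hinj, hrel⟩ := h
  exact ⟨f, fun x hx y hy => hinj x (hx.trans ht) y (hy.trans ht),
    fun x hx y hy => hrel x (hx.trans ht) y (hy.trans ht)⟩

theorem embedsRestr_of_isom {R Q : Struc} (h : Isom R Q) (s : ℕ) : EmbedsRestr R s Q := by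
  obtain ⟨e, he⟩ := h
  exact ⟨e, fun x _ y _ hxy => e.injective hxy, fun x _ y _ => he x y⟩

theorem exists_not_embeds {R Q P : Struc} {s : ℕ} (h : Isom R Q)
    (hs : ¬ EmbedsRestr Q s P) : ∃ t, ¬ EmbedsRestr R t P := by
  obtain ⟨e, he⟩ := h
  refine ⟨(Finset.range (s + 1)).sup (fun x => e.symm x), fun hc => hs ?_⟩
  have hle : ∀ x ≤ s, (e.symm x : ℕ) ≤ (Finset.range (s + 1)).sup (fun x => e.symm x) := by
    intro x hx
    exact Finset.le_sup (Finset.mem_range.2 (Nat.lt_succ_of_le hx))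
  obtain ⟨f, hinj, hrel⟩ := hc
  refine ⟨fun x => f (e.symm x), ?_, ?_⟩
  · intro x hx y hy hxy
    exact e.symm.injective (hinj _ (hle x hx) _ (hle y hy) hxy)
  · intro x hx y hy
    rw [hrel _ (hle x hx) _ (hle y hy)]
    have := he (e.symm x) (e.symm y)
    simpa using this.symm

open Classical in
/-- From an embedding of `P↾s` into `Q`, produce an isomorphic copy of `Q` agreeing
with `P` on `{0,…,s}`. -/
theorem exists_copy {P Q : Struc} {s : ℕ} (h : EmbedsRestr P s Q) :
    ∃ R, Isom R Q ∧ restrEq P R s := by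
  obtain ⟨f, hinj, hrel⟩ := h
  set S : Set ℕ := f '' Set.Iic s with hS
  set T : Set ℕ := Set.Iic s with hT
  -- bijection between the finite parts
  have hmemS : ∀ x ≤ s, f x ∈ S := fun x hx => ⟨x, hx, rfl⟩
  have hchoose : ∀ (n : ℕ) (hn : n ∈ S), Classical.choose hn ∈ Set.Iic s ∧
      f (Classical.choose hn) = n := fun n hn => Classical.choose_spec hn
  let k : S ≃ T :=
    { toFun := fun n => ⟨Classical.choose n.2, (hchoose n.1 n.2).1⟩
      invFun := fun x => ⟨f x.1, hmemS x.1 x.2⟩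
      left_inv := by
        rintro ⟨n, hn⟩
        exact Subtype.ext (hchoose n hn).2
      right_inv := by
        rintro ⟨x, hx⟩
        refine Subtype.ext ?_
        have h1 := hchoose (f x) (hmemS x hx)
        exact hinj _ h1.1 _ hx h1.2 }
  have hSfin : S.Finite := (Set.finite_Iic s).image f
  have hTfin : T.Finite := Set.finite_Iic s
  haveI : Infinite (Sᶜ : Set ℕ) := hSfin.infinite_compl.to_subtype
  haveI : Infinite (Tᶜ : Set ℕ) := hTfin.infinite_compl.to_subtype
  haveI := Nat.Subtype.denumerable (Sᶜ : Set ℕ)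
  haveI := Nat.Subtype.denumerable (Tᶜ : Set ℕ)
  let kc : (Sᶜ : Set ℕ) ≃ (Tᶜ : Set ℕ) :=
    (Denumerable.eqv _).trans (Denumerable.eqv _).symm
  let π : ℕ ≃ ℕ :=
    (Equiv.Set.sumCompl S).symm.trans ((k.sumCongr kc).trans (Equiv.Set.sumCompl T))
  have hπ : ∀ x ≤ s, π (f x) = x := by
    intro x hx
    have h1 : (Equiv.Set.sumCompl S).symm (f x) = Sum.inl ⟨f x, hmemS x hx⟩ :=
      Equiv.Set.sumCompl_symm_apply (x := (⟨f x, hmemS x hx⟩ : S))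
    have h2 : k ⟨f x, hmemS x hx⟩ = ⟨x, hx⟩ := by
      refine Subtype.ext ?_
      have h1' := hchoose (f x) (hmemS x hx)
      exact hinj _ h1'.1 _ hx h1'.2
    show (Equiv.Set.sumCompl T) ((k.sumCongr kc) ((Equiv.Set.sumCompl S).symm (f x))) = x
    rw [h1]
    show (Equiv.Set.sumCompl T) (Sum.inl (k ⟨f x, hmemS x hx⟩)) = x
    rw [h2]
    exact Equiv.Set.sumCompl_apply_inl T _
  refine ⟨fun a b => Q (π.symm a) (π.symm b), ⟨π.symm, fun x y => rfl⟩, ?_⟩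
  intro x hx y hy
  have hx' : π.symm x = f x := (Equiv.symm_apply_eq π).2 (hπ x hx).symm
  have hy' : π.symm y = f y := (Equiv.symm_apply_eq π).2 (hπ y hy).symm
  show P x y = Q (π.symm x) (π.symm y)
  rw [hx', hy', hrel x hx y hy]

open Classical in
/-- The co-learner built from an encoding of the index set. -/
noncomputable def coLearner {I : Type} (e : Encodable I) (A : I → Struc) :
    Struc → ℕ → Option I := fun R s =>
  (@Encodable.decode I e (Nat.unpair s).1).bind fun j =>
    if EmbedsRestr (truncS R s) (min (Nat.unpair s).2 s) (A j) then none else some j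

/-- A countable family of pairwise nonisomorphic structures is co-learnable iff for all
`i ≠ j` there is `s` with `(A i)↾s` not embedding into `A j` and vice versa. -/
theorem coLearnable_iff_antichain {I : Type} [Countable I] (A : I → Struc)
    (hA : ∀ i j, i ≠ j → ¬ Isom (A i) (A j)) :
    (∃ M : Struc → ℕ → Option I, IsLearner M ∧ CoLearns A M) ↔
      ∀ i j, i ≠ j →
        ∃ s, ¬ EmbedsRestr (A i) s (A j) ∧ ¬ EmbedsRestr (A j) s (A i) := by
  constructor
  · rintro ⟨M, hL, hC⟩ i j hij
    by_contra hcon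
    have hcon' : ∀ s, EmbedsRestr (A i) s (A j) ∨ EmbedsRestr (A j) s (A i) := by
      intro s
      by_contra hc
      rw [not_or] at hc
      exact hcon ⟨s, hc⟩
    have hii : Isom (A i) (A i) := ⟨Equiv.refl ℕ, fun x y => rfl⟩
    have hjj : Isom (A j) (A j) := ⟨Equiv.refl ℕ, fun x y => rfl⟩
    obtain ⟨s₁, hs₁⟩ := (hC (A i) i hii j).2 (Ne.symm hij)
    obtain ⟨s₂, hs₂⟩ := (hC (A j) j hjj i).2 hij
    rcases hcon' (max s₁ s₂) with hd | hd
    · obtain ⟨R, hRiso, hRres⟩ := exists_copy (embedsRestr_mono hd (le_max_left _ _))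
      have hMR : M R s₁ = some j := by
        rw [← hL (A i) R s₁ hRres]; exact hs₁
      exact (hC R j hRiso j).1 ⟨s₁, hMR⟩ rfl
    · obtain ⟨R, hRiso, hRres⟩ := exists_copy (embedsRestr_mono hd (le_max_right _ _))
      have hMR : M R s₂ = some i := by
        rw [← hL (A j) R s₂ hRres]; exact hs₂
      exact (hC R i hRiso i).1 ⟨s₂, hMR⟩ rfl
  · intro hanti
    obtain ⟨enc⟩ := nonempty_encodable I
    refine ⟨coLearner enc A, ?_, ?_⟩
    · intro R R' s hres
      unfold coLearner
      rw [truncS_eq hres]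
    · intro R i hRi j
      constructor
      · rintro ⟨s, hs⟩ hji
        subst hji
        unfold coLearner at hs
        cases hdec : @Encodable.decode I enc (Nat.unpair s).1 with
        | none => rw [hdec] at hs; simp at hs
        | some j' =>
          rw [hdec] at hs
          simp only [Option.bind_some] at hs
          split_ifs at hs with hemb
          obtain rfl : j' = j := Option.some.inj hs
          exact hemb ((embedsRestr_truncS (min_le_right _ _)).2
            (embedsRestr_of_isom hRi _))
      · intro hji
        obtain ⟨s₀, h1, _⟩ := hanti i j (Ne.symm hji)
        obtain ⟨t, ht⟩ := exists_not_embeds hRi h1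
        refine ⟨Nat.pair (Encodable.encode j) t, ?_⟩
        have hts : t ≤ Nat.pair (Encodable.encode j) t := Nat.right_le_pair _ _
        unfold coLearner
        rw [Nat.unpair_pair]
        simp only [Encodable.encodek, Option.bind_some]
        rw [if_neg]
        intro hemb
        exact ht ((embedsRestr_truncS hts).1 (by
          rwa [min_eq_left hts] at hemb))
end

section
/- Every finite co-learnable family of pairwise nonisomorphic structures is Fin-learnable: if K = (A_i)_{i<n} is co-learnable by some learner, then there exists a learner that Fin-learns K. -/
/-!
A co-learner, run on a copy of `A i`, names every index except `i` and never names `i`. With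
finitely many indices, the set of indices named so far therefore reaches `{i}ᶜ` at a finite stage
and stays there; the Fin-learner waits for that stage and then outputs the one index never named.
-/

open Filter

theorem restrEq.mono {R R' : Struc} {s t : ℕ} (h : restrEq R R' s) (hts : t ≤ s) :
    restrEq R R' t :=
  fun x hx y hy => h x (hx.trans hts) y (hy.trans hts)

theorem exists_forall_iff_le_of_monotone {p : ℕ → Prop} (hp : Monotone p) (h : ∃ s, p s) :
    ∃ s₀, ∀ s, p s ↔ s₀ ≤ s := by
  classical
  exact ⟨Nat.find h, fun s => ⟨Nat.find_min' h, fun hs => hp hs (Nat.find_spec h)⟩⟩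

section Conjectures

variable {I : Type} [DecidableEq I] (M : Struc → ℕ → Option I)

def conjecturesUpTo (R : Struc) (s : ℕ) : Finset I :=
  (Finset.Iic s).biUnion fun t => (M R t).toFinset

variable {M}

theorem mem_conjecturesUpTo {R : Struc} {s : ℕ} {j : I} :
    j ∈ conjecturesUpTo M R s ↔ ∃ t ≤ s, M R t = some j := by
  simp only [conjecturesUpTo, Finset.mem_biUnion, Finset.mem_Iic, Option.mem_toFinset,
    Option.mem_def]

theorem conjecturesUpTo_mono (R : Struc) : Monotone (conjecturesUpTo M R) :=
  fun _ _ hst _ hj =>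
    let ⟨t, hts, ht⟩ := mem_conjecturesUpTo.mp hj
    mem_conjecturesUpTo.mpr ⟨t, hts.trans hst, ht⟩

theorem IsLearner.conjecturesUpTo_eq (hM : IsLearner M) {R R' : Struc} {s : ℕ}
    (h : restrEq R R' s) : conjecturesUpTo M R s = conjecturesUpTo M R' s :=
  Finset.biUnion_congr rfl fun t ht => by
    rw [hM R R' t (h.mono (Finset.mem_Iic.mp ht))]

end Conjectures

section CoLearns

variable {I : Type} [DecidableEq I] {A : I → Struc} {M : Struc → ℕ → Option I}
  {R : Struc} {i : I}

theorem CoLearns.notMem_conjecturesUpTo (hM : CoLearns A M) (hR : Isom R (A i)) (s : ℕ) :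
    i ∉ conjecturesUpTo M R s := fun hi =>
  let ⟨t, _, ht⟩ := mem_conjecturesUpTo.mp hi
  (hM R i hR i).mp ⟨t, ht⟩ rfl

variable [Fintype I]

theorem CoLearns.eventually_conjecturesUpTo_eq (hM : CoLearns A M) (hR : Isom R (A i)) :
    ∀ᶠ s in atTop, conjecturesUpTo M R s = {i}ᶜ := by
  have hnamed : ∀ j, ∀ᶠ s in atTop, j ≠ i → j ∈ conjecturesUpTo M R s := by
    intro j
    by_cases hj : j = i
    · exact Eventually.of_forall fun _ hji => absurd hj hji
    · obtain ⟨t, ht⟩ := (hM R i hR j).mpr hj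
      exact eventually_ge_atTop t |>.mono fun s hts _ => mem_conjecturesUpTo.mpr ⟨t, hts, ht⟩
  filter_upwards [eventually_all.mpr hnamed] with s hs
  refine (Finset.subset_compl_singleton.mpr (hM.notMem_conjecturesUpTo hR s)).antisymm ?_
  exact fun j hj => hs j (Finset.notMem_singleton.mp (Finset.mem_compl.mp hj))

end CoLearns

section FinLearner

variable {I : Type} [DecidableEq I] [Fintype I]

noncomputable def finLearnerOfCo (M : Struc → ℕ → Option I) (R : Struc) (s : ℕ) : Option I :=
  if h : ∃ i, conjecturesUpTo M R s = {i}ᶜ then some h.choose else none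

variable {M : Struc → ℕ → Option I}

theorem IsLearner.finLearnerOfCo (hM : IsLearner M) : IsLearner (finLearnerOfCo M) := by
  intro R R' s h
  simp only [_root_.finLearnerOfCo, hM.conjecturesUpTo_eq h]

theorem finLearnerOfCo_eq_ite {R : Struc} {s : ℕ} {i : I} (hi : i ∉ conjecturesUpTo M R s) :
    finLearnerOfCo M R s = if conjecturesUpTo M R s = {i}ᶜ then some i else none := by
  by_cases hs : conjecturesUpTo M R s = {i}ᶜ
  · have h : ∃ j, conjecturesUpTo M R s = {j}ᶜ := ⟨i, hs⟩
    rw [finLearnerOfCo, dif_pos h, if_pos hs,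
      Finset.singleton_inj.mp (compl_inj_iff.mp (h.choose_spec.symm.trans hs))]
  · rw [finLearnerOfCo, if_neg hs, dif_neg]
    rintro ⟨j, hj⟩
    obtain rfl : i = j := by simpa [hj] using hi
    exact hs hj

theorem CoLearns.finLearns_finLearnerOfCo {A : I → Struc} (hM : CoLearns A M) :
    FinLearns A (finLearnerOfCo M) := by
  intro R i hR
  have hmono : Monotone fun s => conjecturesUpTo M R s = {i}ᶜ := fun s t hst hs =>
    (Finset.subset_compl_singleton.mpr (hM.notMem_conjecturesUpTo hR t)).antisymm
      (hs ▸ conjecturesUpTo_mono R hst)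
  obtain ⟨s₀, hs₀⟩ := exists_forall_iff_le_of_monotone hmono
    (hM.eventually_conjecturesUpTo_eq hR).exists
  refine ⟨s₀, fun s hs => ?_, fun s hs => ?_⟩ <;>
    rw [finLearnerOfCo_eq_ite (hM.notMem_conjecturesUpTo hR s)]
  · exact if_neg fun h => hs.not_ge ((hs₀ s).mp h)
  · exact if_pos ((hs₀ s).mpr hs)

end FinLearner

theorem coLearnable_to_finLearnable_of_finite_general (n : ℕ) (A : Fin n → Struc)
    (h : ∃ M : Struc → ℕ → Option (Fin n), IsLearner M ∧ CoLearns A M) :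
    ∃ M : Struc → ℕ → Option (Fin n), IsLearner M ∧ FinLearns A M :=
  let ⟨M, hM, hCo⟩ := h
  ⟨finLearnerOfCo M, hM.finLearnerOfCo, hCo.finLearns_finLearnerOfCo⟩

/-- Every finite co-learnable family of pairwise nonisomorphic structures is
Fin-learnable. -/
theorem coLearnable_to_finLearnable_of_finite (n : ℕ) (A : Fin n → Struc)
    (hA : ∀ i j, i ≠ j → ¬ Isom (A i) (A j))
    (h : ∃ M : Struc → ℕ → Option (Fin n), IsLearner M ∧ CoLearns A M) :
    ∃ M : Struc → ℕ → Option (Fin n), IsLearner M ∧ FinLearns A M :=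
  coLearnable_to_finLearnable_of_finite_general n A h
end

section
/- The two-element family {ω, ω*} is not E_range-learnable: there is no map Γ from structures to Baire space ℕ → ℕ, continuous on the set of structures that are copies of ω or of ω*, such that for all such R, R': R ≅ R' if and only if Set.range (Γ R) = Set.range (Γ R'). -/
/-- The learning domain of the family `{ω, ω*}`. -/
def omegaLD : Set Struc := {R | IsCopyOfOmega R ∨ IsCopyOfOmegaStar R}

-- canonical copies
def OmA : Struc := fun x y => decide (x ≤ y)
def OmB : Struc := fun x y => decide (y ≤ x)

def flipf (s k : ℕ) : ℕ := if k ≤ s then s - k else k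

lemma flipf_invol (s : ℕ) : Function.Involutive (flipf s) := by
  intro k
  unfold flipf
  split_ifs <;> omega

def flipE (s : ℕ) : ℕ ≃ ℕ := (flipf_invol s).toPerm

def vdown (s x : ℕ) : ℤ := if x ≤ s then (x : ℤ) else (s : ℤ) - x
def Rdown (s : ℕ) : Struc := fun x y => decide (vdown s x ≤ vdown s y)
def vup (s x : ℕ) : ℤ := if x ≤ s then (s : ℤ) - x else (x : ℤ)
def Rup (s : ℕ) : Struc := fun x y => decide (vup s x ≤ vup s y)

lemma vdown_flip (s k : ℕ) : vdown s (flipf s k) = (s : ℤ) - k := by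
  unfold vdown flipf
  split_ifs with h1 h2 h2 <;> push_cast <;> omega

lemma vup_flip (s k : ℕ) : vup s (flipf s k) = (k : ℤ) := by
  unfold vup flipf
  split_ifs with h1 h2 h2 <;> push_cast <;> omega

lemma Rdown_star (s : ℕ) : IsCopyOfOmegaStar (Rdown s) := by
  refine ⟨flipE s, fun x y => ?_⟩
  show decide (vdown s (flipf s x) ≤ vdown s (flipf s y)) = _
  rw [vdown_flip, vdown_flip]
  apply decide_eq_decide.mpr
  omega

lemma Rup_omega (s : ℕ) : IsCopyOfOmega (Rup s) := by
  refine ⟨flipE s, fun x y => ?_⟩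
  show decide (vup s (flipf s x) ≤ vup s (flipf s y)) = _
  rw [vup_flip, vup_flip]
  apply decide_eq_decide.mpr
  omega

lemma restr_down (s : ℕ) : restrEq OmA (Rdown s) s := by
  intro x hx y hy
  unfold OmA Rdown vdown
  rw [if_pos hx, if_pos hy]
  apply (decide_eq_decide.mpr _).symm
  omega

lemma restr_up (s : ℕ) : restrEq OmB (Rup s) s := by
  intro x hx y hy
  unfold OmB Rup vup
  rw [if_pos hx, if_pos hy]
  apply (decide_eq_decide.mpr _).symm
  omega

lemma isom_canon_omega {R : Struc} (h : IsCopyOfOmega R) : Isom R OmA := by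
  obtain ⟨e, he⟩ := h
  refine ⟨e.symm, fun x y => ?_⟩
  calc OmA (e.symm x) (e.symm y) = decide (e.symm x ≤ e.symm y) := rfl
    _ = R (e (e.symm x)) (e (e.symm y)) := (he _ _).symm
    _ = R x y := by rw [e.apply_symm_apply, e.apply_symm_apply]

lemma isom_canon_star {R : Struc} (h : IsCopyOfOmegaStar R) : Isom R OmB := by
  obtain ⟨e, he⟩ := h
  refine ⟨e.symm, fun x y => ?_⟩
  calc OmB (e.symm x) (e.symm y) = decide (e.symm y ≤ e.symm x) := rfl
    _ = R (e (e.symm x)) (e (e.symm y)) := (he _ _).symm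
    _ = R x y := by rw [e.apply_symm_apply, e.apply_symm_apply]

lemma not_isom_AB : ¬ Isom OmA OmB := by
  rintro ⟨e, he⟩
  have h := he 0 (e.symm (e 0 + 1))
  rw [e.apply_symm_apply] at h
  simp only [OmA, OmB, decide_eq_decide] at h
  omega

lemma tendsto_key {Γ : Struc → (ℕ → ℕ)} (hc : ContinuousOn Γ omegaLD)
    {C : Struc} (hC : C ∈ omegaLD) {R : ℕ → Struc} (hR : ∀ s, R s ∈ omegaLD)
    (hrestr : ∀ s, restrEq C (R s) s) (k : ℕ) :
    ∃ s, Γ (R s) k = Γ C k := by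
  have h1 : Filter.Tendsto R Filter.atTop (nhds C) := by
    rw [tendsto_pi_nhds]
    intro x
    rw [tendsto_pi_nhds]
    intro y
    rw [nhds_discrete, Filter.tendsto_pure]
    filter_upwards [Filter.eventually_ge_atTop (max x y)] with s hs
    exact (hrestr s x (le_trans (le_max_left x y) hs) y (le_trans (le_max_right x y) hs)).symm
  have h2 : Filter.Tendsto (fun s => Γ (R s)) Filter.atTop (nhds (Γ C)) :=
    (hc C hC).tendsto.comp (tendsto_nhdsWithin_iff.mpr ⟨h1, Filter.Eventually.of_forall hR⟩)
  have h3 : Filter.Tendsto (fun s => Γ (R s) k) Filter.atTop (nhds (Γ C k)) :=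
    ((continuous_apply k).tendsto (Γ C)).comp h2
  rw [nhds_discrete, Filter.tendsto_pure] at h3
  exact h3.exists

/-- The family `{ω, ω*}` is not `E_range`-learnable. -/
theorem omega_omegaStar_not_erangeLearnable :
    ¬ ∃ Γ : Struc → (ℕ → ℕ), ContinuousOn Γ omegaLD ∧
        ∀ R ∈ omegaLD, ∀ R' ∈ omegaLD,
          (Isom R R' ↔ Set.range (Γ R) = Set.range (Γ R')) := by

  rintro ⟨Γ, hc, hiff⟩
  have hAmem : OmA ∈ omegaLD := Or.inl ⟨Equiv.refl ℕ, fun x y => rfl⟩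
  have hBmem : OmB ∈ omegaLD := Or.inr ⟨Equiv.refl ℕ, fun x y => rfl⟩
  have hneq : Set.range (Γ OmA) ≠ Set.range (Γ OmB) :=
    fun h => not_isom_AB ((hiff OmA hAmem OmB hBmem).mpr h)
  rw [Ne, Set.ext_iff, not_forall] at hneq
  obtain ⟨n, hn⟩ := hneq
  have hdmem : ∀ s, Rdown s ∈ omegaLD := fun s => Or.inr (Rdown_star s)
  have humem : ∀ s, Rup s ∈ omegaLD := fun s => Or.inl (Rup_omega s)
  by_cases hA : n ∈ Set.range (Γ OmA)
  · have hB : n ∉ Set.range (Γ OmB) := fun h => hn ⟨fun _ => h, fun _ => hA⟩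
    obtain ⟨k, hk⟩ := hA
    obtain ⟨s, hs⟩ := tendsto_key hc hAmem hdmem restr_down k
    have hr : Set.range (Γ (Rdown s)) = Set.range (Γ OmB) :=
      (hiff (Rdown s) (hdmem s) OmB hBmem).mp (isom_canon_star (Rdown_star s))
    exact hB (hr ▸ ⟨k, hs.trans hk⟩)
  · have hB : n ∈ Set.range (Γ OmB) := by
      by_contra hB
      exact hn ⟨fun h => absurd h hA, fun h => absurd h hB⟩
    obtain ⟨k, hk⟩ := hB
    obtain ⟨s, hs⟩ := tendsto_key hc hBmem humem restr_up k
    have hr : Set.range (Γ (Rup s)) = Set.range (Γ OmA) :=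
      (hiff (Rup s) (humem s) OmA hAmem).mp (isom_canon_omega (Rup_omega s))
    exact hA (hr ▸ ⟨k, hs.trans hk⟩)
end

section
/- Every finite E_range-learnable family is Ex-learnable: if K = (A_i)_{i<n} is a finite family of pairwise nonisomorphic structures and there is a map Γ from structures to Baire space ℕ → ℕ, continuous on LD(K), with R ≅ R' iff Set.range (Γ R) = Set.range (Γ R') for all R, R' ∈ LD(K), then some learner Ex-learns K. -/
lemma restrEq_symm' {R R' : Struc} {s : ℕ} (h : restrEq R R' s) : restrEq R' R s :=
  fun x hx y hy => (h x hx y hy).symm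

lemma restrEq_mono {R R' : Struc} {s t : ℕ} (hst : s ≤ t) (h : restrEq R R' t) :
    restrEq R R' s := fun x hx y hy => h x (hx.trans hst) y (hy.trans hst)

/-- Basic opens in `Struc` contain restriction-neighborhoods. -/
lemma open_restr {U : Set Struc} (hU : IsOpen U) {R : Struc} (hR : R ∈ U) :
    ∃ s, ∀ R', restrEq R R' s → R' ∈ U := by
  classical
  obtain ⟨I, u, hu, hsub⟩ := isOpen_pi_iff.mp hU R hR
  choose J v hv hsub2 using fun (a : I) => isOpen_pi_iff.mp (hu a a.2).1 (R a) (hu a a.2).2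
  refine ⟨(I.sup id) ⊔ (I.attach.sup fun a => (J a).sup id), fun R' hre => ?_⟩
  apply hsub
  intro a ha
  apply hsub2 ⟨a, ha⟩
  intro b hb
  have hax : a ≤ (I.sup id) ⊔ (I.attach.sup fun a => (J a).sup id) :=
    le_sup_of_le_left (Finset.le_sup (f := id) ha)
  have hbx : b ≤ (I.sup id) ⊔ (I.attach.sup fun a => (J a).sup id) := by
    refine le_sup_of_le_right ?_
    exact le_trans (Finset.le_sup (f := id) hb)
      (Finset.le_sup (f := fun a => (J a).sup id) (Finset.mem_attach I ⟨a, ha⟩))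
  have : R' a b = R a b := (hre a hax b hbx).symm
  rw [this]
  exact (hv ⟨a, ha⟩ b hb).2

/-- Continuity on a set gives local determination of values by finite restrictions. -/
lemma cont_restr {S : Set Struc} (Γ : Struc → ℕ → ℕ) (hc : ContinuousOn Γ S)
    {R : Struc} (hR : R ∈ S) (m : ℕ) :
    ∃ s, ∀ R' ∈ S, restrEq R R' s → Γ R' m = Γ R m := by
  have hcm : ContinuousOn (fun R' => Γ R' m) S := (continuous_apply m).comp_continuousOn hc
  have hcw := hcm R hR
  have hmem : {Γ R m} ∈ nhds (Γ R m) :=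
    IsOpen.mem_nhds (isOpen_discrete _) rfl
  have : (fun R' => Γ R' m) ⁻¹' {Γ R m} ∈ nhdsWithin R S := hcw hmem
  rw [mem_nhdsWithin] at this
  obtain ⟨U, hUopen, hRU, hUsub⟩ := this
  obtain ⟨s, hs⟩ := open_restr hUopen hRU
  exact ⟨s, fun R' hR'S hre => hUsub ⟨hs R' hre, hR'S⟩⟩

/-- Every finite `E_range`-learnable family of pairwise nonisomorphic structures is
Ex-learnable. -/
theorem erangeLearnable_to_exLearnable_of_finite (n : ℕ) (A : Fin n → Struc)
    (hA : ∀ i j, i ≠ j → ¬ Isom (A i) (A j))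
    (h : ∃ Γ : Struc → (ℕ → ℕ), ContinuousOn Γ (LD A) ∧
        ∀ R ∈ LD A, ∀ R' ∈ LD A,
          (Isom R R' ↔ Set.range (Γ R) = Set.range (Γ R'))) :
    ∃ M : Struc → ℕ → Option (Fin n), IsLearner M ∧ ExLearns A M := by
  classical
  obtain ⟨Γ, hcont, hiff⟩ := h
  have hAi : ∀ i, A i ∈ LD A := fun i => ⟨i, Equiv.refl ℕ, fun x y => rfl⟩
  set Rng : Fin n → Set ℕ := fun i => Set.range (Γ (A i)) with hRngdef
  -- values of Γ determined by the restriction to stage s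
  set V : Struc → ℕ → Set ℕ := fun R s =>
    {v | ∃ m ≤ s, ∀ R' ∈ LD A, restrEq R R' s → Γ R' m = v} with hVdef
  set Good : Set ℕ → Fin n → Prop := fun W i =>
    W ⊆ Rng i ∧ ∀ j, W ⊆ Rng j → Rng i ⊆ Rng j with hGooddef
  set M : Struc → ℕ → Option (Fin n) := fun R s =>
    if hg : ∃ i, Good (V R s) i then some hg.choose else none with hMdef
  have hVresp : ∀ R R' s, restrEq R R' s → V R s = V R' s := by
    intro R R' s hre
    ext v
    constructor
    · rintro ⟨m, hm, hdet⟩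
      exact ⟨m, hm, fun R'' hR'' hre'' =>
        hdet R'' hR'' (fun x hx y hy => (hre x hx y hy).trans (hre'' x hx y hy))⟩
    · rintro ⟨m, hm, hdet⟩
      exact ⟨m, hm, fun R'' hR'' hre'' =>
        hdet R'' hR'' (fun x hx y hy => ((hre x hx y hy).symm).trans (hre'' x hx y hy))⟩
  refine ⟨M, ?_, ?_⟩
  · intro R R' s hre
    simp only [hMdef, hVresp R R' s hre]
  · -- Ex-learning
    intro R i hRi
    have hRLD : R ∈ LD A := ⟨i, hRi⟩
    have hrange : Set.range (Γ R) = Rng i := (hiff R hRLD (A i) (hAi i)).mp hRi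
    -- V R s is contained in range Γ R
    have hVsub : ∀ s, V R s ⊆ Set.range (Γ R) := by
      rintro s v ⟨m, _, hdet⟩
      exact ⟨m, hdet R hRLD (fun x _ y _ => rfl)⟩
    -- every value of Γ R eventually appears in V
    have hVev : ∀ v ∈ Set.range (Γ R), ∃ s₀, ∀ s ≥ s₀, v ∈ V R s := by
      rintro v ⟨m, rfl⟩
      obtain ⟨s, hs⟩ := cont_restr Γ hcont hRLD m
      refine ⟨max m s, fun t ht => ⟨m, le_trans (le_max_left m s) ht, ?_⟩⟩
      intro R' hR' hre
      exact hs R' hR' (restrEq_mono (le_trans (le_max_right m s) ht) hre)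
    -- bound eliminating each bad candidate
    have hbad : ∀ j : Fin n, ¬ Rng i ⊆ Rng j → ∃ s₀, ∀ s ≥ s₀, ¬ (V R s ⊆ Rng j) := by
      intro j hj
      obtain ⟨v, hvi, hvj⟩ := Set.not_subset.mp hj
      obtain ⟨s₀, hs₀⟩ := hVev v (hrange ▸ hvi)
      exact ⟨s₀, fun s hs hsub => hvj (hsub (hs₀ s hs))⟩
    -- a uniform bound
    set B : Fin n → ℕ := fun j =>
      if hj : ¬ Rng i ⊆ Rng j then (hbad j hj).choose else 0 with hBdef
    refine ⟨Finset.univ.sup B, fun s hs => ?_⟩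
    have hGoodi : Good (V R s) i := by
      refine ⟨hrange ▸ hVsub s, fun j hj => ?_⟩
      by_contra hij
      have hBj : B j = (hbad j hij).choose := by simp [hBdef, hij]
      have : s ≥ B j := le_trans (Finset.le_sup (Finset.mem_univ j)) hs
      exact (hbad j hij).choose_spec s (hBj ▸ this) hj
    have hex : ∃ i', Good (V R s) i' := ⟨i, hGoodi⟩
    have huniq : ∀ i', Good (V R s) i' → i' = i := by
      intro i' hGi'
      by_contra hne
      apply hA i i' (fun hnn => hne hnn.symm)
      apply (hiff (A i) (hAi i) (A i') (hAi i')).mpr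
      exact le_antisymm (hGoodi.2 i' hGi'.1) (hGi'.2 i hGoodi.1)
    simp only [hMdef, dif_pos hex]
    exact congrArg some (huniq hex.choose hex.choose_spec)
end

section
/- Every E_range-learnable countable family of pairwise nonisomorphic structures is E_3-learnable: if there is a map Γ from structures to Baire space ℕ → ℕ, continuous on LD(K), with R ≅ R' iff Set.range (Γ R) = Set.range (Γ R') for all R, R' ∈ LD(K), then there is a map Δ from structures to ℕ → (ℕ → ℕ), continuous on LD(K), such that for all R, R' ∈ LD(K): R ≅ R' iff Δ R E_3 Δ R'. -/
/-- Every `E_range`-learnable countable family of pairwise nonisomorphic structures is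
`E₃`-learnable. -/
theorem erangeLearnable_to_e3Learnable {I : Type} [Countable I] (A : I → Struc)
    (hA : ∀ i j, i ≠ j → ¬ Isom (A i) (A j))
    (h : ∃ Γ : Struc → (ℕ → ℕ), ContinuousOn Γ (LD A) ∧
        ∀ R ∈ LD A, ∀ R' ∈ LD A,
          (Isom R R' ↔ Set.range (Γ R) = Set.range (Γ R'))) :
    ∃ Δ : Struc → (ℕ → ℕ → ℕ), ContinuousOn Δ (LD A) ∧
      ∀ R ∈ LD A, ∀ R' ∈ LD A, (Isom R R' ↔ E3 (Δ R) (Δ R')) := by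
  classical
  obtain ⟨Γ, hc, hΓ⟩ := h
  set g : (ℕ → ℕ) → ℕ → ℕ → ℕ := fun p m n => if ∃ k ≤ n, p k = m then 1 else 0 with hg
  have hgcont : Continuous g := by
    refine continuous_pi fun m => continuous_pi fun n => ?_
    have heq : (fun p : ℕ → ℕ => g p m n) =
        (fun v : Fin (n+1) → ℕ => if ∃ k, v k = m then 1 else 0) ∘
        (fun p (k : Fin (n+1)) => p k) := by
      funext p
      have hiff : (∃ k ≤ n, p k = m) ↔ ∃ k : Fin (n+1), p ↑k = m := by
        constructor
        · rintro ⟨k, hk, hkm⟩; exact ⟨⟨k, Nat.lt_succ_of_le hk⟩, hkm⟩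
        · rintro ⟨k, hkm⟩; exact ⟨k, Nat.lt_succ_iff.mp k.2, hkm⟩
      simp only [Function.comp, hg, hiff]
    rw [heq]
    exact continuous_of_discreteTopology.comp (continuous_pi fun k => continuous_apply _)
  have sub : ∀ p q : ℕ → ℕ, E3 (g p) (g q) → Set.range p ⊆ Set.range q := by
    rintro p q he m ⟨k, hk⟩
    obtain ⟨N, hN⟩ := he m
    have h1 : ∃ j ≤ max N k, p j = m := ⟨k, le_max_right _ _, hk⟩
    have hgn := hN (max N k) (le_max_left _ _)
    rw [show g p m (max N k) = 1 from if_pos h1] at hgn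
    by_contra hm
    have h2 : ¬ ∃ j ≤ max N k, q j = m := by
      rintro ⟨j, _, hj⟩; exact hm ⟨j, hj⟩
    rw [show g q m (max N k) = 0 from if_neg h2] at hgn
    exact one_ne_zero hgn
  have key : ∀ p q : ℕ → ℕ, Set.range p = Set.range q ↔ E3 (g p) (g q) := by
    intro p q
    constructor
    · intro hr m
      by_cases hm : m ∈ Set.range p
      · obtain ⟨k, hk⟩ := hm
        have hm' : m ∈ Set.range q := hr ▸ ⟨k, hk⟩
        obtain ⟨k', hk'⟩ := hm'
        refine ⟨max k k', fun n hn => ?_⟩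
        have h1 : ∃ j ≤ n, p j = m := ⟨k, le_trans (le_max_left _ _) hn, hk⟩
        have h2 : ∃ j ≤ n, q j = m := ⟨k', le_trans (le_max_right _ _) hn, hk'⟩
        simp [hg, h1, h2]
      · have hm' : m ∉ Set.range q := hr ▸ hm
        refine ⟨0, fun n _ => ?_⟩
        have h1 : ¬ ∃ j ≤ n, p j = m := by rintro ⟨j, _, hj⟩; exact hm ⟨j, hj⟩
        have h2 : ¬ ∃ j ≤ n, q j = m := by rintro ⟨j, _, hj⟩; exact hm' ⟨j, hj⟩
        simp [hg, h1, h2]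
    · intro he
      exact le_antisymm (sub p q he)
        (sub q p fun m => (he m).imp fun N hN n hn => (hN n hn).symm)
  refine ⟨fun R => g (Γ R), hgcont.comp_continuousOn hc, fun R hR R' hR' => ?_⟩
  rw [hΓ R hR R' hR', key]
end

section
/- A countable family K of pairwise nonisomorphic structures is nUs-learnable if and only if it is Dec-learnable. -/
section Aux
variable {I : Type}

/-- `j` has been abandoned by `M` on `R` by stage `s`. -/
def Cond (M : Struc → ℕ → Option I) (R : Struc) (j : I) (s : ℕ) : Prop :=
  ∃ t < s, M R t = some j ∧ ∃ u, t < u ∧ u ≤ s ∧ M R u ≠ some j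

open Classical in
/-- The "tidied" learner: suppress any conjecture that was previously abandoned. -/
noncomputable def tidy (M : Struc → ℕ → Option I) (R : Struc) (s : ℕ) : Option I :=
  match M R s with
  | none => none
  | some j => if Cond M R j s then none else some j

lemma tidy_eq_some {M : Struc → ℕ → Option I} {R : Struc} {j : I} {s : ℕ} :
    tidy M R s = some j ↔ M R s = some j ∧ ¬ Cond M R j s := by
  unfold tidy
  cases h : M R s with
  | none => simp
  | some k =>
    by_cases hc : Cond M R k s
    · simp only [if_pos hc, h, Option.some_inj]
      constructor
      · intro h'; exact absurd h' (by simp)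
      · rintro ⟨rfl, hnc⟩; exact absurd hc hnc
    · simp only [if_neg hc, h, Option.some_inj]
      exact ⟨fun hk => ⟨hk, hk ▸ hc⟩, fun ⟨hk, _⟩ => hk⟩

lemma tidy_congr {M : Struc → ℕ → Option I} {R R' : Struc} {j : I} {s : ℕ}
    (hM : ∀ t ≤ s, M R t = M R' t) (h : tidy M R s = some j) : tidy M R' s = some j := by
  obtain ⟨h1, h2⟩ := tidy_eq_some.mp h
  refine tidy_eq_some.mpr ⟨(hM s le_rfl).symm.trans h1, fun hc => h2 ?_⟩
  obtain ⟨a, ha, hc1, u, hu1, hu2, hc2⟩ := hc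
  exact ⟨a, ha, (hM a ha.le).symm ▸ hc1, u, hu1, hu2, (hM u hu2).symm ▸ hc2⟩

lemma cond_mono {M : Struc → ℕ → Option I} {R : Struc} {j : I} {s t : ℕ}
    (hst : s ≤ t) (h : Cond M R j s) : Cond M R j t := by
  obtain ⟨a, ha, h1, u, hu1, hu2, h2⟩ := h
  exact ⟨a, lt_of_lt_of_le ha hst, h1, u, hu1, le_trans hu2 hst, h2⟩

end Aux

/-- A countable family of pairwise nonisomorphic structures is nUs-learnable iff it is
Dec-learnable. -/
theorem nusLearnable_iff_decLearnable {I : Type} [Countable I] (A : I → Struc)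
    (hA : ∀ i j, i ≠ j → ¬ Isom (A i) (A j)) :
    (∃ M : Struc → ℕ → Option I, IsLearner M ∧ NUsLearns A M) ↔
      ∃ M : Struc → ℕ → Option I, IsLearner M ∧ DecLearns A M := by
  constructor
  · rintro ⟨M, hL, hEx, hnUs⟩
    refine ⟨tidy M, ?_, ?_, ?_⟩
    · -- it is a learner
      intro R R' s hre
      have hM : ∀ t ≤ s, M R t = M R' t := fun t ht =>
        hL R R' t (fun x hx y hy => hre x (hx.trans ht) y (hy.trans ht))
      cases hT : tidy M R s with
      | some j => exact (tidy_congr hM hT).symm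
      | none =>
        cases hT' : tidy M R' s with
        | none => rfl
        | some j =>
          exact absurd (tidy_congr (fun t ht => (hM t ht).symm) hT') (by rw [hT]; simp)
    · -- Ex-learns
      intro R i hIso
      obtain ⟨s₀, hs₀⟩ := hEx R i hIso
      refine ⟨s₀, fun s hs => tidy_eq_some.mpr ⟨hs₀ s hs, ?_⟩⟩
      rintro ⟨a, ha, h1, u, hu1, hu2, h2⟩
      exact h2 (hnUs R i hIso a h1 u hu1.le)
    · -- Dec condition
      intro R _ j s hs hs1 t hts
      intro htidy
      obtain ⟨hMt, hct⟩ := tidy_eq_some.mp htidy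
      obtain ⟨hMs, hcs⟩ := tidy_eq_some.mp hs
      apply hct
      by_cases h1 : M R (s + 1) = some j
      · have : Cond M R j (s + 1) := by
          by_contra hc
          exact hs1 (tidy_eq_some.mpr ⟨h1, hc⟩)
        exact cond_mono hts this
      · exact ⟨s, hts, hMs, s + 1, Nat.lt_succ_self s, hts, h1⟩
  · rintro ⟨M, hL, hEx, hDec⟩
    refine ⟨M, hL, hEx, fun R i hIso s hs => ?_⟩
    intro t hts
    induction t, hts using Nat.le_induction with
    | base => exact hs
    | succ n hn ih =>
      by_contra hne
      obtain ⟨s₀, hs₀⟩ := hEx R i hIso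
      have hgt : max s₀ (n + 1) > n := lt_of_lt_of_le (Nat.lt_succ_self n) (le_max_right _ _)
      exact hDec R ⟨i, hIso⟩ i n ih hne (max s₀ (n + 1)) hgt (hs₀ _ (le_max_left _ _))
end
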